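/- For all n, m ≥ 0, Σ_{k=1}^{n+1} (-1)^{n-k+1} · k! · k^m · S(n+1,k) = Σ_{k=1}^{m+1} (-1)^{m-k+1} · k! · k^n · S(m+1,k), where S denotes the Stirling numbers of the second kind. -/

import Mathlib

/-!
Write `T(N, m) = ∑ₖ (-1)^(N-k) k! k^m S(N, k)`. Feeding the recurrence
`S(N+1, k) = k S(N, k) + S(N, k-1)` into the sum gives `T(N+1, m) = ∑_{i ≤ m} C(m+1, i) T(N, i)`,
the binomial coefficients coming from `(k+1)^(m+1) - k^(m+1)`. The visibly symmetric sum
`P(N, M) = ∑ₖ (k-1)! k! S(N, k) S(M, k)` obeys the same recursion in the form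
`P(N+1, m+1) = ∑_{i ≤ m} C(m+1, i) P(N, i+1)`, because `∑_{i < M} C(M, i) S(i+1, j) = j S(M+1, j+1)`.
Both start from `T(1, m) = P(1, m+1) = 1`, so `T(n+1, m) = P(n+1, m+1) = P(m+1, n+1) = T(m+1, n)`.
-/

/-- Stirling numbers of the second kind. -/
def stirling : ℕ → ℕ → ℕ
  | 0, 0 => 1
  | 0, _ + 1 => 0
  | _ + 1, 0 => 0
  | n + 1, k + 1 => (k + 1) * stirling n (k + 1) + stirling n k

open Finset

theorem stirling_eq_stirlingSecond : stirling = Nat.stirlingSecond := by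
  funext n k
  induction n generalizing k with
  | zero => cases k <;> rfl
  | succ n ih => cases k <;> simp [stirling, Nat.stirlingSecond, ih]

namespace Nat

theorem sum_mul_stirlingSecond_succ {R : Type*} [CommSemiring R] (f : ℕ → R) (N : ℕ) :
    ∑ k ∈ range (N + 2), f k * stirlingSecond (N + 1) k =
      ∑ k ∈ range (N + 1), (k * f k + f (k + 1)) * stirlingSecond N k := by
  have hshift : ∑ k ∈ range (N + 1), ((k + 1 : ℕ) : R) * f (k + 1) * stirlingSecond N (k + 1) =
      ∑ k ∈ range (N + 1), (k : R) * f k * stirlingSecond N k := by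
    rw [sum_range_succ _ N, stirlingSecond_eq_zero_of_lt (lt_succ_self N),
      sum_range_succ' _ N]
    simp
  rw [sum_range_succ', stirlingSecond_succ_zero, Nat.cast_zero, mul_zero, add_zero]
  calc ∑ k ∈ range (N + 1), f (k + 1) * stirlingSecond (N + 1) (k + 1)
      = ∑ k ∈ range (N + 1),
          (((k + 1 : ℕ) : R) * f (k + 1) * stirlingSecond N (k + 1)
            + f (k + 1) * stirlingSecond N k) :=
        sum_congr rfl fun k _ => by rw [stirlingSecond_succ_succ]; push_cast; ring
    _ = ∑ k ∈ range (N + 1),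
          ((k : R) * f k * stirlingSecond N k + f (k + 1) * stirlingSecond N k) := by
        rw [sum_add_distrib, sum_add_distrib, hshift]
    _ = _ := sum_congr rfl fun k _ => by ring

theorem stirlingSecond_succ_succ_eq_sum_choose (n k : ℕ) :
    stirlingSecond (n + 1) (k + 1) = ∑ i ∈ range (n + 1), n.choose i * stirlingSecond i k := by
  induction n generalizing k with
  | zero =>
    rcases k with _ | _ | k
    · rfl
    · rfl
    · simp [stirlingSecond_eq_zero_of_lt]
  | succ n ih =>
    have hpascal := sum_choose_succ_mul (R := ℕ) (fun i _ => stirlingSecond i k) n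
    simp only [Nat.cast_id] at hpascal
    rw [hpascal, ← ih]
    cases k with
    | zero => simp [stirlingSecond_succ_succ]
    | succ k =>
      simp only [stirlingSecond_succ_succ, mul_add, sum_add_distrib, ← ih, mul_left_comm _ (k + 1),
        ← mul_sum]
      ring

theorem sum_choose_mul_stirlingSecond_succ (M j : ℕ) :
    ∑ i ∈ range M, M.choose i * stirlingSecond (i + 1) j = j * stirlingSecond (M + 1) (j + 1) := by
  cases j with
  | zero => simp
  | succ j =>
    have hfull : ∑ i ∈ range (M + 1), M.choose i * stirlingSecond (i + 1) (j + 1) =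
        (j + 1) * stirlingSecond (M + 1) (j + 2) + stirlingSecond (M + 1) (j + 1) := by
      simp only [stirlingSecond_succ_succ, mul_add, sum_add_distrib, mul_left_comm _ (j + 1),
        ← mul_sum, ← stirlingSecond_succ_succ_eq_sum_choose]
    rw [sum_range_succ, choose_self, one_mul] at hfull
    exact Nat.add_right_cancel hfull

end Nat

open Nat

/-- The sign `(-1) ^ (N + k)` equals `(-1) ^ (N - k)` for `k ≤ N` and avoids truncated
subtraction. -/
def altStirlingSum (N m : ℕ) : ℤ :=
  ∑ k ∈ range (N + 1), (-1) ^ (N + k) * (k ! : ℤ) * (k : ℤ) ^ m * (stirlingSecond N k : ℤ)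

theorem altStirlingSum_succ (N m : ℕ) :
    altStirlingSum (N + 1) m =
      ∑ i ∈ range (m + 1), ((m + 1).choose i : ℤ) * altStirlingSum N i := by
  have hbinom (x : ℤ) :
      (x + 1) ^ (m + 1) = x ^ (m + 1) + ∑ i ∈ range (m + 1), (m + 1).choose i * x ^ i := by
    rw [add_pow, sum_range_succ, add_comm]
    simp [mul_comm]
  simp only [altStirlingSum, mul_sum]
  rw [sum_comm, sum_mul_stirlingSecond_succ]
  refine sum_congr rfl fun k _ => ?_
  have hfactor : ∑ i ∈ range (m + 1), ((m + 1).choose i : ℤ) *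
      ((-1) ^ (N + k) * (k ! : ℤ) * (k : ℤ) ^ i * (stirlingSecond N k : ℤ)) =
      (-1) ^ (N + k) * (k ! : ℤ) * (stirlingSecond N k : ℤ) *
        ∑ i ∈ range (m + 1), ((m + 1).choose i : ℤ) * (k : ℤ) ^ i := by
    rw [mul_sum]
    exact sum_congr rfl fun _ _ => by ring
  rw [hfactor]
  push_cast [factorial_succ]
  linear_combination (-1) ^ (N + k) * (k ! : ℤ) * (stirlingSecond N k : ℤ) * hbinom k

/-- At `k = 0` the junk value `(0 - 1)! = 1` is harmless: `S(N, 0) * S(M, 0) = 0` unless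
`N = M = 0`. -/
def stirlingPairSum (N M : ℕ) : ℕ :=
  ∑ k ∈ range (N + 1), (k - 1)! * k ! * stirlingSecond N k * stirlingSecond M k

theorem stirlingPairSum_eq_sum_range {N K : ℕ} (M : ℕ) (h : N < K) :
    stirlingPairSum N M =
      ∑ k ∈ range K, (k - 1)! * k ! * stirlingSecond N k * stirlingSecond M k := by
  refine sum_subset (range_subset_range.2 h) fun k _ hk => ?_
  rw [mem_range, not_lt] at hk
  simp [stirlingSecond_eq_zero_of_lt (Nat.lt_of_succ_le hk)]

theorem stirlingPairSum_comm (N M : ℕ) : stirlingPairSum N M = stirlingPairSum M N := by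
  rw [stirlingPairSum_eq_sum_range M (show N < N + M + 1 by omega),
    stirlingPairSum_eq_sum_range N (show M < N + M + 1 by omega)]
  exact sum_congr rfl fun _ _ => by ring

theorem sum_choose_mul_stirlingPairSum (N m : ℕ) :
    ∑ i ∈ range (m + 1), (m + 1).choose i * stirlingPairSum (N + 1) (i + 1) =
      stirlingPairSum (N + 2) (m + 1) := by
  set f : ℕ → ℕ := fun k => (k - 1)! * k ! * stirlingSecond (m + 1) k
  calc ∑ i ∈ range (m + 1), (m + 1).choose i * stirlingPairSum (N + 1) (i + 1)
      = ∑ k ∈ range (N + 2),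
          (k - 1)! * k ! * stirlingSecond (N + 1) k * (k * stirlingSecond (m + 2) (k + 1)) := by
        simp only [stirlingPairSum, mul_sum]
        rw [sum_comm]
        refine sum_congr rfl fun k _ => ?_
        rw [← sum_choose_mul_stirlingSecond_succ, mul_sum]
        exact sum_congr rfl fun _ _ => by ring
    _ = ∑ k ∈ range (N + 2), (k * f k + f (k + 1)) * stirlingSecond (N + 1) k := by
        refine sum_congr rfl fun k _ => ?_
        rcases k with _ | k
        · simp
        · simp only [f, add_tsub_cancel_right, stirlingSecond_succ_succ (m + 1) (k + 1),
            factorial_succ]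
          ring
    _ = ∑ k ∈ range (N + 3), f k * stirlingSecond (N + 2) k :=
        (sum_mul_stirlingSecond_succ f (N + 1)).symm
    _ = stirlingPairSum (N + 2) (m + 1) := sum_congr rfl fun _ _ => by ring

theorem altStirlingSum_succ_eq_stirlingPairSum (n m : ℕ) :
    altStirlingSum (n + 1) m = stirlingPairSum (n + 1) (m + 1) := by
  induction n generalizing m with
  | zero => simp [altStirlingSum, stirlingPairSum, sum_range_succ, stirlingSecond_one_right]
  | succ n ih =>
    rw [altStirlingSum_succ, ← sum_choose_mul_stirlingPairSum]
    push_cast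
    simp only [ih]

theorem sum_Icc_eq_altStirlingSum (n m : ℕ) :
    ∑ k ∈ Icc 1 (n + 1), (-1 : ℤ) ^ (n + 1 - k) * (k ! : ℤ) * (k : ℤ) ^ m *
        (stirlingSecond (n + 1) k : ℤ) = altStirlingSum (n + 1) m := by
  rw [altStirlingSum, range_eq_Ico, sum_eq_sum_Ico_succ_bot (by omega), stirlingSecond_succ_zero,
    Nat.cast_zero, mul_zero, zero_add, Ico_add_one_right_eq_Icc]
  refine sum_congr rfl fun k hk => ?_
  have hkn := (mem_Icc.1 hk).2
  have hsign : (-1 : ℤ) ^ (n + 1 - k) = (-1) ^ (n + 1 + k) := by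
    rw [show n + 1 + k = n + 1 - k + 2 * k by omega, pow_add, pow_mul]
    simp
  rw [hsign]

theorem stirling_sum_symmetric (n m : ℕ) :
    ∑ k ∈ Finset.Icc 1 (n + 1),
        (-1 : ℤ) ^ (n + 1 - k) * (k.factorial : ℤ) * (k : ℤ) ^ m * (stirling (n + 1) k : ℤ) =
      ∑ k ∈ Finset.Icc 1 (m + 1),
        (-1 : ℤ) ^ (m + 1 - k) * (k.factorial : ℤ) * (k : ℤ) ^ n * (stirling (m + 1) k : ℤ) := by
  rw [stirling_eq_stirlingSecond, sum_Icc_eq_altStirlingSum, sum_Icc_eq_altStirlingSum,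
    altStirlingSum_succ_eq_stirlingPairSum, altStirlingSum_succ_eq_stirlingPairSum,
    stirlingPairSum_comm]
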